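/- arXiv:2511.17343 — 3 statements merged into one kernel-verified Lean document; each statement's English description precedes it below -/
import Mathlib

section
/- If {S_j}_{j∈J} is a (finite or countable) family of subsets of V such that the closed neighborhoods S̄_j = S_j ∪ bS_j are pairwise disjoint, and each S_j is a λ_j-set with λ := sup_j λ_j < ∞, then S = ∪_j S_j is a λ-set. -/
noncomputable section

open scoped ENNReal NNReal

/-- The closure `T̄ = T ∪ bT` of a vertex set `T`, where
`bT = {v ∈ V \ T : v ∼ u for some u ∈ T}` is the vertex boundary of `T`. -/
def closedNbhd {V : Type*} (G : SimpleGraph V) (T : Set V) : Set V :=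
  T ∪ {v : V | v ∉ T ∧ ∃ u ∈ T, G.Adj v u}

lemma mem_closedNbhd_of_mem {V : Type*} (G : SimpleGraph V) {T : Set V} {v : V}
    (hv : v ∈ T) : v ∈ closedNbhd G T := Or.inl hv

lemma mem_closedNbhd_of_adj {V : Type*} (G : SimpleGraph V) {T : Set V} {v u : V}
    (hu : u ∈ T) (h : G.Adj v u) : v ∈ closedNbhd G T := by
  by_cases hv : v ∈ T
  · exact Or.inl hv
  · exact Or.inr ⟨hv, u, hu, h⟩

lemma lp_nnnorm_sq_eq_tsum {V : Type*} (f : lp (fun _ : V => ℂ) 2) :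
    (‖f‖₊ : ℝ≥0∞) ^ 2 = ∑' v, (‖f v‖₊ : ℝ≥0∞) ^ 2 := by
  have h2 : (0:ℝ) < (2 : ℝ≥0∞).toReal := by norm_num
  have h1 := lp.norm_rpow_eq_tsum h2 f
  have hsum : Summable (fun v => ‖f v‖ ^ (2 : ℝ≥0∞).toReal) := (lp.memℓp f).summable h2
  have key : ENNReal.ofReal (‖f‖ ^ (2 : ℝ≥0∞).toReal) =
      ∑' v, ENNReal.ofReal (‖f v‖ ^ (2 : ℝ≥0∞).toReal) := by
    rw [h1]
    exact ENNReal.ofReal_tsum_of_nonneg (fun v => Real.rpow_nonneg (norm_nonneg _) _) hsum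
  have htR : (2 : ℝ≥0∞).toReal = (2:ℕ) := by norm_num
  rw [htR] at key
  simp only [Real.rpow_natCast] at key
  calc (‖f‖₊ : ℝ≥0∞) ^ 2 = ENNReal.ofReal (‖f‖ ^ (2:ℕ)) := by
        rw [ENNReal.ofReal_pow (norm_nonneg _), ofReal_norm, enorm_eq_nnnorm]
    _ = ∑' v, (‖f v‖₊ : ℝ≥0∞) ^ 2 := by
        rw [key]
        exact tsum_congr fun v => by
          rw [ENNReal.ofReal_pow (norm_nonneg _), ofReal_norm, enorm_eq_nnnorm]

/-- If `{S_j}_{j ∈ J}` is a finite or countable family of subsets of `V` whose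
closures `S̄_j` are pairwise disjoint, and each `S_j` is a `λ_j`-set with
`λ = sup_j λ_j < ∞`, then `S = ⋃_j S_j` is a `λ`-set. -/
theorem union_of_lambda_sets
    {V : Type*} [Countable V] (G : SimpleGraph V) [DecidableRel G.Adj]
    [G.LocallyFinite] (hconn : G.Connected)
    (hdeg : ∃ D : ℕ, ∀ v : V, G.degree v ≤ D)
    (L : lp (fun _ : V => ℂ) 2 →L[ℂ] lp (fun _ : V => ℂ) 2)
    (hL : ∀ (f : lp (fun _ : V => ℂ) 2) (v : V),
      L f v = (1 / (Real.sqrt (G.degree v) : ℂ)) *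
        ∑ u ∈ G.neighborFinset v,
          (f v / (Real.sqrt (G.degree v) : ℂ) - f u / (Real.sqrt (G.degree u) : ℂ)))
    {J : Type*} [Countable J] (S : J → Set V) (lam : J → ℝ)
    (hdisj : Pairwise (fun i j => Disjoint (closedNbhd G (S i)) (closedNbhd G (S j))))
    (hlam : ∀ j, ∀ φ : lp (fun _ : V => ℂ) 2,
      (∀ v ∉ S j, φ v = 0) → ‖φ‖ ≤ lam j * ‖L φ‖)
    (hbdd : BddAbove (Set.range lam)) :
    ∀ φ : lp (fun _ : V => ℂ) 2,
      (∀ v ∉ ⋃ j, S j, φ v = 0) → ‖φ‖ ≤ (⨆ j, lam j) * ‖L φ‖ := by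
  classical
  intro φ hφ
  -- the restriction of φ to S j, as an element of lp
  have hmem : ∀ j : J, Memℓp (fun v => Set.indicator (S j) (⇑φ) v) 2 := by
    intro j
    apply memℓp_gen
    have h2 : (0:ℝ) < (2 : ℝ≥0∞).toReal := by norm_num
    refine Summable.of_nonneg_of_le (fun v => Real.rpow_nonneg (norm_nonneg _) _)
      (fun v => ?_) ((lp.memℓp φ).summable h2)
    refine Real.rpow_le_rpow (norm_nonneg _) ?_ (by norm_num)
    by_cases hv : v ∈ S j
    · simp [Set.indicator_of_mem hv]
    · simp [Set.indicator_of_notMem hv]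
  set ψ : J → lp (fun _ : V => ℂ) 2 := fun j => ⟨fun v => Set.indicator (S j) (⇑φ) v, hmem j⟩
    with hψdef
  have hψ_apply : ∀ j v, ψ j v = Set.indicator (S j) (⇑φ) v := fun j v => rfl
  have hψ_supp : ∀ j, ∀ v ∉ S j, ψ j v = 0 := by
    intro j v hv
    rw [hψ_apply, Set.indicator_of_notMem hv]
  -- φ agrees with ψ j at every vertex equal or adjacent to a vertex of the closure
  have key1 : ∀ (j : J) (v : V), v ∈ closedNbhd G (S j) → ∀ u : V,
      (u = v ∨ G.Adj v u) → φ u = ψ j u := by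
    intro j v hv u hu
    by_cases hu' : u ∈ S j
    · rw [hψ_apply, Set.indicator_of_mem hu']
    · rw [hψ_apply, Set.indicator_of_notMem hu']
      apply hφ
      intro humem
      obtain ⟨i, hi⟩ := Set.mem_iUnion.mp humem
      have hij : i ≠ j := fun h => hu' (h ▸ hi)
      have hvclosed_i : v ∈ closedNbhd G (S i) := by
        rcases hu with rfl | hadj
        · exact mem_closedNbhd_of_mem G hi
        · exact mem_closedNbhd_of_adj G hi hadj
      exact Set.disjoint_left.mp (hdisj hij) hvclosed_i hv
  -- L φ agrees with L (ψ j) on the closure of S j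
  have key2 : ∀ (j : J) (v : V), v ∈ closedNbhd G (S j) → L φ v = L (ψ j) v := by
    intro j v hv
    rw [hL, hL]
    congr 1
    refine Finset.sum_congr rfl fun u humem => ?_
    have hadj : G.Adj v u := (G.mem_neighborFinset v u).mp humem
    rw [key1 j v hv v (Or.inl rfl), key1 j v hv u (Or.inr hadj)]
  -- L (ψ j) vanishes outside the closure of S j
  have key3 : ∀ (j : J) (v : V), v ∉ closedNbhd G (S j) → L (ψ j) v = 0 := by
    intro j v hv
    rw [hL]
    have hv' : v ∉ S j := fun h => hv (mem_closedNbhd_of_mem G h)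
    have hsum0 : ∑ u ∈ G.neighborFinset v,
        (ψ j v / (Real.sqrt (G.degree v) : ℂ) - ψ j u / (Real.sqrt (G.degree u) : ℂ)) = 0 := by
      refine Finset.sum_eq_zero fun u humem => ?_
      have hadj : G.Adj v u := (G.mem_neighborFinset v u).mp humem
      have hu' : u ∉ S j := fun h => hv (mem_closedNbhd_of_adj G h hadj)
      rw [hψ_supp j v hv', hψ_supp j u hu']
      simp
    rw [hsum0, mul_zero]
  -- each ψ j satisfies the λ_j-set inequality
  have hψnorm : ∀ j, ‖ψ j‖ ≤ lam j * ‖L (ψ j)‖ := fun j => hlam j (ψ j) (hψ_supp j)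
  by_cases hpos : 0 ≤ ⨆ j, lam j
  · -- main case
    set lamSup : ℝ := ⨆ j, lam j with hlamSup
    set c : ℝ≥0 := lamSup.toNNReal with hc
    have hlamle : ∀ j, lam j ≤ lamSup := fun j => le_ciSup hbdd j
    -- squared-norm bound in ℝ≥0∞ for each block
    have hblock : ∀ j, (‖ψ j‖₊ : ℝ≥0∞) ^ 2 ≤ ((c : ℝ≥0∞) * (‖L (ψ j)‖₊ : ℝ≥0∞)) ^ 2 := by
      intro j
      have h1 : ‖ψ j‖ ≤ lamSup * ‖L (ψ j)‖ :=
        (hψnorm j).trans (mul_le_mul_of_nonneg_right (hlamle j) (norm_nonneg _))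
      have h2 : ‖ψ j‖₊ ≤ c * ‖L (ψ j)‖₊ := by
        rw [← NNReal.coe_le_coe, NNReal.coe_mul, coe_nnnorm, coe_nnnorm, hc,
          Real.coe_toNNReal _ hpos]
        exact h1
      calc (‖ψ j‖₊ : ℝ≥0∞) ^ 2 ≤ ((c * ‖L (ψ j)‖₊ : ℝ≥0) : ℝ≥0∞) ^ 2 :=
            pow_le_pow_left' (ENNReal.coe_le_coe.mpr h2) 2
        _ = ((c : ℝ≥0∞) * (‖L (ψ j)‖₊ : ℝ≥0∞)) ^ 2 := by push_cast; ring
    -- the main chain of inequalities, in ℝ≥0∞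
    set F : V → ℝ≥0∞ := fun v => (‖L φ v‖₊ : ℝ≥0∞) ^ 2 with hF
    set Gg : V → ℝ≥0∞ := fun v => (‖φ v‖₊ : ℝ≥0∞) ^ 2 with hGg
    have stepA : ∑' v, Gg v ≤ ∑' j, ∑' v, (S j).indicator Gg v := by
      rw [ENNReal.tsum_comm (f := fun j v => (S j).indicator Gg v)]
      refine ENNReal.tsum_le_tsum fun v => ?_
      by_cases h : ∃ j, v ∈ S j
      · obtain ⟨j, hj⟩ := h
        calc Gg v = (S j).indicator Gg v := (Set.indicator_of_mem hj _).symm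
          _ ≤ ∑' i, (S i).indicator Gg v := ENNReal.le_tsum j
      · have : φ v = 0 := hφ v (by simpa [Set.mem_iUnion] using fun j hj => h ⟨j, hj⟩)
        simp [hGg, this]
    have stepPsi : ∀ j, ∑' v, (S j).indicator Gg v = (‖ψ j‖₊ : ℝ≥0∞) ^ 2 := by
      intro j
      rw [lp_nnnorm_sq_eq_tsum (ψ j)]
      refine tsum_congr fun v => ?_
      by_cases hv : v ∈ S j
      · rw [Set.indicator_of_mem hv, hψ_apply, Set.indicator_of_mem hv]
      · rw [Set.indicator_of_notMem hv, hψ_apply, Set.indicator_of_notMem hv]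
        simp
    have stepC : ∀ j, (‖L (ψ j)‖₊ : ℝ≥0∞) ^ 2 = ∑' v, (closedNbhd G (S j)).indicator F v := by
      intro j
      rw [lp_nnnorm_sq_eq_tsum (L (ψ j))]
      refine tsum_congr fun v => ?_
      by_cases hv : v ∈ closedNbhd G (S j)
      · rw [Set.indicator_of_mem hv, hF, ← key2 j v hv]
      · rw [Set.indicator_of_notMem hv, key3 j v hv]
        simp
    have stepD : ∑' j, ∑' v, (closedNbhd G (S j)).indicator F v ≤ ∑' v, F v := by
      rw [ENNReal.tsum_comm (f := fun j v => (closedNbhd G (S j)).indicator F v)]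
      refine ENNReal.tsum_le_tsum fun v => ?_
      by_cases h : ∃ j, v ∈ closedNbhd G (S j)
      · obtain ⟨j₀, hj₀⟩ := h
        have : ∑' i, (closedNbhd G (S i)).indicator F v
            = (closedNbhd G (S j₀)).indicator F v := by
          refine tsum_eq_single j₀ fun i hi => ?_
          have hvi : v ∉ closedNbhd G (S i) := fun hin =>
            Set.disjoint_left.mp (hdisj hi) hin hj₀
          exact Set.indicator_of_notMem hvi _
        rw [this, Set.indicator_of_mem hj₀]
      · have : ∀ i, (closedNbhd G (S i)).indicator F v = 0 := fun i =>
          Set.indicator_of_notMem (fun hin => h ⟨i, hin⟩) _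
        simp [this]
    have main : (‖φ‖₊ : ℝ≥0∞) ^ 2 ≤ ((c : ℝ≥0∞) * (‖L φ‖₊ : ℝ≥0∞)) ^ 2 := by
      calc (‖φ‖₊ : ℝ≥0∞) ^ 2 = ∑' v, Gg v := lp_nnnorm_sq_eq_tsum φ
        _ ≤ ∑' j, ∑' v, (S j).indicator Gg v := stepA
        _ = ∑' j, (‖ψ j‖₊ : ℝ≥0∞) ^ 2 := tsum_congr stepPsi
        _ ≤ ∑' j, ((c : ℝ≥0∞) * (‖L (ψ j)‖₊ : ℝ≥0∞)) ^ 2 := ENNReal.tsum_le_tsum hblock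
        _ = (c : ℝ≥0∞) ^ 2 * ∑' j, (‖L (ψ j)‖₊ : ℝ≥0∞) ^ 2 := by
            rw [← ENNReal.tsum_mul_left]
            exact tsum_congr fun j => (mul_pow _ _ _)
        _ = (c : ℝ≥0∞) ^ 2 * ∑' j, ∑' v, (closedNbhd G (S j)).indicator F v := by
            rw [tsum_congr stepC]
        _ ≤ (c : ℝ≥0∞) ^ 2 * ∑' v, F v := by gcongr
        _ = (c : ℝ≥0∞) ^ 2 * (‖L φ‖₊ : ℝ≥0∞) ^ 2 := by rw [← lp_nnnorm_sq_eq_tsum (L φ)]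
        _ = ((c : ℝ≥0∞) * (‖L φ‖₊ : ℝ≥0∞)) ^ 2 := (mul_pow _ _ _).symm
    -- extract the conclusion
    have main' : (‖φ‖₊ : ℝ≥0) ≤ c * ‖L φ‖₊ := by
      have h1 : ((‖φ‖₊ ^ 2 : ℝ≥0) : ℝ≥0∞) ≤ ((c * ‖L φ‖₊) ^ 2 : ℝ≥0) := by
        push_cast
        exact main
      rw [ENNReal.coe_le_coe] at h1
      exact (pow_le_pow_iff_left₀ (by positivity) (by positivity) two_ne_zero).mp h1
    have := NNReal.coe_le_coe.mpr main'
    push_cast at this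
    rwa [Real.coe_toNNReal _ hpos] at this
  · -- degenerate case: sup < 0, forcing φ = 0
    push_neg at hpos
    have hφ0 : φ = 0 := by
      refine lp.ext (funext fun v => ?_)
      rw [lp.coeFn_zero, Pi.zero_apply]
      by_cases hv : v ∈ ⋃ j, S j
      · obtain ⟨j, hj⟩ := Set.mem_iUnion.mp hv
        have hlj : lam j ≤ ⨆ i, lam i := le_ciSup hbdd j
        have hneg : lam j * ‖L (ψ j)‖ ≤ 0 :=
          mul_nonpos_of_nonpos_of_nonneg (hlj.trans hpos.le) (norm_nonneg _)
        have h0 : ψ j = 0 := norm_le_zero_iff.mp ((hψnorm j).trans hneg)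
        have : ψ j v = 0 := by rw [h0, lp.coeFn_zero, Pi.zero_apply]
        rwa [hψ_apply, Set.indicator_of_mem hj] at this
      · exact hφ v hv
    rw [hφ0, map_zero]
    simp
end
end

section
/- If S ⊂ V is a λ-set and λω < 1, then W = V \ S is a uniqueness set for PW_ω(G): any two functions in PW_ω(G) agreeing on W are equal. -/
set_option maxHeartbeats 1000000

noncomputable section

local notation "⟪" x ", " y "⟫" => @inner ℂ _ _ x y

/-- `f` belongs to the Paley–Wiener space `PW_ω(G)`.  For a bounded positive
self-adjoint operator `L`, the condition `∀ n, ‖Lⁿf‖ ≤ ωⁿ‖f‖` characterizes exactly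
the range of the spectral projection `1_{[0,ω]}(L)`. -/
def memPaleyWiener {H : Type*} [NormedAddCommGroup H] [InnerProductSpace ℂ H]
    (L : H →L[ℂ] H) (ω : ℝ) (f : H) : Prop :=
  ∀ n : ℕ, ‖(L ^ n) f‖ ≤ ω ^ n * ‖f‖

section Aux

variable {V : Type*}

/-- `lp.single` applied, for a constant family. -/
lemma lp_single_apply' [DecidableEq V] (v : V) (a : ℂ) (w : V) :
    (lp.single 2 (E := fun _ : V => ℂ) v a : ∀ _ : V, ℂ) w = if w = v then a else 0 := by
  by_cases h : w = v
  · subst h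
    rw [if_pos rfl]
    exact lp.single_apply_self (E := fun _ : V => ℂ) 2 w a
  · rw [if_neg h]
    exact lp.single_apply_ne (E := fun _ : V => ℂ) 2 v a h

end Aux

/-- If `S ⊆ V` is a `λ`-set and `λω < 1`, then `W = V \ S` is a uniqueness set for
`PW_ω(G)`: any two functions of `PW_ω(G)` agreeing on `W` are equal. Here `L` is
the normalized graph Laplacian on `ℓ²(V)`. -/
theorem complement_of_lambda_set_uniqueness
    {V : Type*} [Countable V] (G : SimpleGraph V) [DecidableRel G.Adj]
    [G.LocallyFinite] (hconn : G.Connected)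
    (hdeg : ∃ D : ℕ, ∀ v : V, G.degree v ≤ D)
    (L : lp (fun _ : V => ℂ) 2 →L[ℂ] lp (fun _ : V => ℂ) 2)
    (hL : ∀ (f : lp (fun _ : V => ℂ) 2) (v : V),
      L f v = (1 / (Real.sqrt (G.degree v) : ℂ)) *
        ∑ u ∈ G.neighborFinset v,
          (f v / (Real.sqrt (G.degree v) : ℂ) - f u / (Real.sqrt (G.degree u) : ℂ)))
    (S : Set V) (lam ω : ℝ) (hlam : 0 ≤ lam) (hω : 0 ≤ ω)
    (hS : ∀ φ : lp (fun _ : V => ℂ) 2, (∀ v ∉ S, φ v = 0) → ‖φ‖ ≤ lam * ‖L φ‖)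
    (hlamω : lam * ω < 1) :
    ∀ f g : lp (fun _ : V => ℂ) 2, memPaleyWiener L ω f → memPaleyWiener L ω g →
      (∀ w ∈ Sᶜ, f w = g w) → f = g := by
  classical
  -- value of L on a single
  have hLsingle : ∀ (v : V) (a : ℂ) (u : V),
      L (lp.single 2 v a) u =
        (1 / (Real.sqrt (G.degree u) : ℂ)) *
          ((if u = v then (G.degree u : ℂ) * (a / (Real.sqrt (G.degree u) : ℂ)) else 0)
            - (if G.Adj u v then a / (Real.sqrt (G.degree v) : ℂ) else 0)) := by
    intro v a u
    rw [hL]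
    congr 1
    by_cases huv : u = v
    · subst huv
      have hnot : ¬ G.Adj u u := G.irrefl
      rw [if_pos rfl, if_neg hnot, sub_zero]
      have : ∀ w ∈ G.neighborFinset u,
          (lp.single 2 (E := fun _ : V => ℂ) u a : ∀ _ : V, ℂ) u / (Real.sqrt (G.degree u) : ℂ)
            - (lp.single 2 (E := fun _ : V => ℂ) u a : ∀ _ : V, ℂ) w / (Real.sqrt (G.degree w) : ℂ)
            = a / (Real.sqrt (G.degree u) : ℂ) := by
        intro w hw
        have hwne : w ≠ u := G.ne_of_adj (G.adj_symm ((G.mem_neighborFinset u w).1 hw))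
        rw [lp_single_apply', lp_single_apply', if_pos rfl, if_neg hwne, zero_div, sub_zero]
      rw [Finset.sum_congr rfl this, Finset.sum_const, SimpleGraph.card_neighborFinset_eq_degree,
        nsmul_eq_mul]
    · have h1 : (lp.single 2 (E := fun _ : V => ℂ) v a : ∀ _ : V, ℂ) u = 0 := by
        rw [lp_single_apply', if_neg huv]
      by_cases hadj : G.Adj u v
      · rw [if_neg huv, if_pos hadj, zero_sub]
        have hv : v ∈ G.neighborFinset u := (G.mem_neighborFinset u v).2 hadj
        rw [Finset.sum_eq_single_of_mem v hv]
        · rw [h1, lp_single_apply', if_pos rfl, zero_div, zero_sub]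
        · intro w hw hwv
          rw [h1, lp_single_apply', if_neg hwv, zero_div, zero_div, sub_zero]
      · rw [if_neg huv, if_neg hadj, sub_zero]
        apply Finset.sum_eq_zero
        intro w hw
        have hwv : w ≠ v := by
          rintro rfl
          exact hadj ((G.mem_neighborFinset u w).1 hw)
        rw [h1, lp_single_apply', if_neg hwv, zero_div, zero_div, sub_zero]
  -- symmetry on singles
  have key1 : ∀ (v u : V) (a b : ℂ),
      ⟪L (lp.single 2 v a), lp.single 2 u b⟫ = ⟪lp.single 2 v a, L (lp.single 2 u b)⟫ := by
    intro v u a b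
    rw [lp.inner_single_right, lp.inner_single_left, hLsingle, hLsingle]
    simp only [RCLike.inner_apply]
    by_cases huv : u = v
    · subst huv
      have hirr : ¬ G.Adj u u := G.irrefl
      simp only [eq_self_iff_true, if_true, if_neg hirr, sub_zero]
      simp only [map_mul, map_sub, map_div₀, map_one, map_natCast, Complex.conj_ofReal]
      ring
    · have hvu : v ≠ u := Ne.symm huv
      by_cases hadj : G.Adj u v
      · have hadj' : G.Adj v u := hadj.symm
        simp only [if_neg huv, if_neg hvu, if_pos hadj, if_pos hadj', zero_sub]
        simp only [map_neg, map_mul, map_div₀, map_one, Complex.conj_ofReal]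
        ring
      · have hadj' : ¬ G.Adj v u := fun h => hadj h.symm
        simp only [if_neg huv, if_neg hvu, if_neg hadj, if_neg hadj', sub_zero]
        simp
  -- full symmetry of L
  have hsingsum : ∀ x : lp (fun _ : V => ℂ) 2, HasSum (fun v : V => lp.single 2 v (x v)) x :=
    fun x => lp.hasSum_single (by norm_num : (2:ENNReal) ≠ ⊤) x
  have key : ∀ x y : lp (fun _ : V => ℂ) 2, ⟪L x, y⟫ = ⟪x, L y⟫ := by
    have inner_left_exp : ∀ (x z : lp (fun _ : V => ℂ) 2),
        HasSum (fun v : V => ⟪lp.single 2 v (x v), z⟫) ⟪x, z⟫ := by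
      intro x z
      have h1 : HasSum (fun v : V => ⟪z, lp.single 2 v (x v)⟫) ⟪z, x⟫ :=
        (innerSL ℂ z).hasSum (hsingsum x)
      have h2 := h1.star
      simpa only [Complex.star_def, inner_conj_symm] using h2
    intro x y
    have middle : ∀ u : V, ∀ b : ℂ, ⟪L x, lp.single 2 u b⟫ = ⟪x, L (lp.single 2 u b)⟫ := by
      intro u b
      have hLx : HasSum (fun v : V => L (lp.single 2 v (x v))) (L x) :=
        L.hasSum (hsingsum x)
      have h1pre := (innerSL ℂ ((lp.single 2 u b) : lp (fun _ : V => ℂ) 2)).hasSum hLx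
      simp only [innerSL_apply_apply] at h1pre
      have h1 : HasSum (fun v : V => ⟪lp.single 2 u b, L (lp.single 2 v (x v))⟫)
          ⟪lp.single 2 u b, L x⟫ := h1pre
      have h2 : HasSum (fun v : V => ⟪L (lp.single 2 v (x v)), lp.single 2 u b⟫)
          ⟪L x, lp.single 2 u b⟫ := by
        have := h1.star
        simpa only [Complex.star_def, inner_conj_symm] using this
      have h3 : HasSum (fun v : V => ⟪lp.single 2 v (x v), L (lp.single 2 u b)⟫)
          ⟪x, L (lp.single 2 u b)⟫ := inner_left_exp x (L (lp.single 2 u b))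
      have h4 : (fun v : V => ⟪L (lp.single 2 v (x v)), lp.single 2 u b⟫)
          = fun v : V => ⟪lp.single 2 v (x v), L (lp.single 2 u b)⟫ := by
        funext v; exact key1 v u (x v) b
      rw [h4] at h2
      exact h2.unique h3
    have houter1 : HasSum (fun u : V => ⟪L x, lp.single 2 u (y u)⟫) ⟪L x, y⟫ :=
      (innerSL ℂ (L x)).hasSum (hsingsum y)
    have houter2 : HasSum (fun u : V => ⟪x, L (lp.single 2 u (y u))⟫) ⟪x, L y⟫ :=
      (innerSL ℂ x).hasSum (L.hasSum (hsingsum y))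
    have h4 : (fun u : V => ⟪L x, lp.single 2 u (y u)⟫)
        = fun u : V => ⟪x, L (lp.single 2 u (y u))⟫ := by
      funext u; exact middle u (y u)
    rw [h4] at houter1
    exact houter1.unique houter2
  -- symmetry of powers
  have keyPow : ∀ (n : ℕ) (x y : lp (fun _ : V => ℂ) 2), ⟪(L ^ n) x, y⟫ = ⟪x, (L ^ n) y⟫ := by
    intro n
    induction n with
    | zero => intro x y; simp
    | succ n ih =>
      intro x y
      have e1 : (L ^ (n + 1)) x = (L ^ n) (L x) := by
        rw [pow_succ]; rfl
      have e2 : (L ^ (n + 1)) y = L ((L ^ n) y) := by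
        rw [pow_succ']; rfl
      rw [e1, e2, ih (L x) y, key x ((L ^ n) y)]
  -- norm-squared inequality
  have normsq : ∀ (k : ℕ) (x : lp (fun _ : V => ℂ) 2), ‖(L ^ k) x‖ ^ 2 ≤ ‖x‖ * ‖(L ^ (2 * k)) x‖ := by
    intro k x
    have h1 : (‖(L ^ k) x‖ : ℝ) ^ 2 = RCLike.re ⟪(L ^ k) x, (L ^ k) x⟫ :=
      (InnerProductSpace.norm_sq_eq_re_inner (𝕜 := ℂ) ((L ^ k) x))
    have h2 : ⟪(L ^ k) x, (L ^ k) x⟫ = ⟪x, (L ^ (2 * k)) x⟫ := by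
      rw [keyPow k x ((L ^ k) x)]
      congr 1
      rw [two_mul, pow_add]
      rfl
    calc ‖(L ^ k) x‖ ^ 2 = RCLike.re ⟪x, (L ^ (2 * k)) x⟫ := by rw [h1, h2]
      _ ≤ ‖(⟪x, (L ^ (2 * k)) x⟫ : ℂ)‖ := RCLike.re_le_norm _
      _ ≤ ‖x‖ * ‖(L ^ (2 * k)) x‖ := norm_inner_le_norm _ _
  -- main argument
  intro f g hf hg hagree
  set φ : lp (fun _ : V => ℂ) 2 := f - g with hφdef
  have hsupp : ∀ v ∉ S, φ v = 0 := by
    intro v hv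
    have : φ v = f v - g v := by
      simp [hφdef]
    rw [this, hagree v (Set.mem_compl hv), sub_self]
  by_cases hφ0 : φ = 0
  · exact sub_eq_zero.1 hφ0
  have hφpos : 0 < ‖φ‖ := norm_pos_iff.2 hφ0
  set C : ℝ := ‖f‖ + ‖g‖ with hC
  have hφn : ∀ n : ℕ, ‖(L ^ n) φ‖ ≤ ω ^ n * C := by
    intro n
    have : (L ^ n) φ = (L ^ n) f - (L ^ n) g := by
      simp [hφdef, map_sub]
    rw [this]
    calc ‖(L ^ n) f - (L ^ n) g‖ ≤ ‖(L ^ n) f‖ + ‖(L ^ n) g‖ := norm_sub_le _ _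
      _ ≤ ω ^ n * ‖f‖ + ω ^ n * ‖g‖ := add_le_add (hf n) (hg n)
      _ = ω ^ n * C := by rw [hC]; ring
  have hCpos : 0 < C := by
    have : ‖φ‖ ≤ C := by
      rw [hφdef, hC]; exact norm_sub_le f g
    linarith
  -- iterated inequality
  have claim : ∀ n : ℕ, ‖L φ‖ ^ (2 ^ n) ≤ ‖(L ^ (2 ^ n)) φ‖ * ‖φ‖ ^ (2 ^ n - 1) := by
    intro n
    induction n with
    | zero =>
      simp [pow_one]
    | succ n ih =>
      have h2n : 1 ≤ 2 ^ n := Nat.one_le_two_pow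
      have e : 2 ^ (n + 1) = 2 ^ n * 2 := by ring
      rw [e, pow_mul ‖L φ‖ (2 ^ n) 2]
      have step1 : (‖L φ‖ ^ 2 ^ n) ^ 2 ≤ (‖(L ^ 2 ^ n) φ‖ * ‖φ‖ ^ (2 ^ n - 1)) ^ 2 := by
        apply pow_le_pow_left₀ (pow_nonneg (norm_nonneg _) _) ih
      have step2 : (‖(L ^ 2 ^ n) φ‖ * ‖φ‖ ^ (2 ^ n - 1)) ^ 2
          = ‖(L ^ 2 ^ n) φ‖ ^ 2 * (‖φ‖ ^ (2 ^ n - 1)) ^ 2 := by ring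
      have step3 : ‖(L ^ 2 ^ n) φ‖ ^ 2 ≤ ‖φ‖ * ‖(L ^ (2 * 2 ^ n)) φ‖ := normsq _ φ
      have epow : (‖φ‖ ^ (2 ^ n - 1)) ^ 2 = ‖φ‖ ^ (2 * (2 ^ n - 1)) := by
        rw [← pow_mul, Nat.mul_comm]
      have efin : ‖φ‖ * ‖φ‖ ^ (2 * (2 ^ n - 1)) = ‖φ‖ ^ (2 ^ n * 2 - 1) := by
        rw [← pow_succ']
        congr 1
        omega
      have e2 : 2 * 2 ^ n = 2 ^ n * 2 := by ring
      calc (‖L φ‖ ^ 2 ^ n) ^ 2 ≤ ‖(L ^ 2 ^ n) φ‖ ^ 2 * (‖φ‖ ^ (2 ^ n - 1)) ^ 2 := by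
            rw [← step2]; exact step1
        _ ≤ (‖φ‖ * ‖(L ^ (2 * 2 ^ n)) φ‖) * (‖φ‖ ^ (2 ^ n - 1)) ^ 2 := by
            apply mul_le_mul_of_nonneg_right step3 (pow_nonneg (pow_nonneg (norm_nonneg _) _) _)
        _ = ‖(L ^ (2 * 2 ^ n)) φ‖ * (‖φ‖ * ‖φ‖ ^ (2 * (2 ^ n - 1))) := by
            rw [epow]; ring
        _ = ‖(L ^ (2 ^ n * 2)) φ‖ * ‖φ‖ ^ (2 ^ n * 2 - 1) := by
            rw [efin, e2]
  -- conclude ‖Lφ‖ ≤ ω ‖φ‖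
  have hLφ : ‖L φ‖ ≤ ω * ‖φ‖ := by
    by_contra hcon
    push_neg at hcon
    set s : ℝ := ‖L φ‖ with hs
    set t : ℝ := ω * ‖φ‖ with ht
    have htnn : 0 ≤ t := mul_nonneg hω (norm_nonneg _)
    have hbound : ∀ n : ℕ, s ^ (2 ^ n) * ‖φ‖ ≤ C * t ^ (2 ^ n) := by
      intro n
      have h1 := claim n
      have h2 : ‖(L ^ (2 ^ n)) φ‖ * ‖φ‖ ^ (2 ^ n - 1) ≤ (ω ^ (2 ^ n) * C) * ‖φ‖ ^ (2 ^ n - 1) :=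
        mul_le_mul_of_nonneg_right (hφn _) (pow_nonneg (norm_nonneg _) _)
      have h3 : s ^ (2 ^ n) * ‖φ‖ ≤ (ω ^ (2 ^ n) * C) * ‖φ‖ ^ (2 ^ n - 1) * ‖φ‖ :=
        mul_le_mul_of_nonneg_right (le_trans h1 h2) (norm_nonneg _)
      have h4 : ‖φ‖ ^ (2 ^ n - 1) * ‖φ‖ = ‖φ‖ ^ (2 ^ n) := by
        rw [← pow_succ]
        congr 1
        have : 1 ≤ 2 ^ n := Nat.one_le_two_pow
        omega
      calc s ^ (2 ^ n) * ‖φ‖ ≤ (ω ^ (2 ^ n) * C) * ‖φ‖ ^ (2 ^ n - 1) * ‖φ‖ := h3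
        _ = C * (ω ^ (2 ^ n) * ‖φ‖ ^ (2 ^ n)) := by rw [mul_assoc, h4]; ring
        _ = C * t ^ (2 ^ n) := by rw [ht, mul_pow]
    rcases eq_or_lt_of_le htnn with ht0 | htpos
    · -- t = 0
      have h := hbound 0
      rw [← ht0] at h
      have : s * ‖φ‖ ≤ 0 := by
        have h0 : (0:ℝ) ^ (2 ^ 0) = 0 := by norm_num
        calc s * ‖φ‖ = s ^ (2 ^ 0) * ‖φ‖ := by norm_num
          _ ≤ C * 0 ^ (2 ^ 0) := h
          _ = 0 := by norm_num
      have hspos : 0 < s := lt_of_le_of_lt htnn hcon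
      nlinarith
    · -- t > 0
      have hr : 1 < s / t := (one_lt_div htpos).2 hcon
      obtain ⟨n, hn⟩ := pow_unbounded_of_one_lt (C / ‖φ‖) hr
      have hle : (s / t) ^ n ≤ (s / t) ^ (2 ^ n) :=
        pow_le_pow_right₀ hr.le (Nat.le_of_lt (Nat.lt_two_pow_self (n := n)))
      have hfrac : (s / t) ^ (2 ^ n) ≤ C / ‖φ‖ := by
        rw [div_pow, div_le_div_iff₀ (pow_pos htpos _) hφpos]
        exact hbound n
      linarith [lt_of_lt_of_le hn hle, hfrac]
  -- finish
  have h1 : ‖φ‖ ≤ lam * ‖L φ‖ := hS φ hsupp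
  have h2 : lam * ‖L φ‖ ≤ lam * (ω * ‖φ‖) := mul_le_mul_of_nonneg_left hLφ hlam
  have : ‖φ‖ ≤ (lam * ω) * ‖φ‖ := by
    calc ‖φ‖ ≤ lam * (ω * ‖φ‖) := le_trans h1 h2
      _ = (lam * ω) * ‖φ‖ := by ring
  nlinarith
end
end

section
/- Sampling theorem (complements of λ-sets are sampling sets): Let S ⊂ V be a λ-set and W = V \ S. If ω ≥ 0 satisfies λω < 1, then for every f ∈ PW_ω(G), ‖f‖_W ≤ ‖f‖₂ ≤ ((1 + λ·ω_max)/(1 − λω)) ‖f‖_W, where ‖f‖_W = (Σ_{w∈W} |f(w)|²)^{1/2} and ω_max = ‖L‖. -/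
noncomputable section

/-- Sampling theorem: if `S ⊆ V` is a `λ`-set, `W = V \ S` and `λω < 1`, then for
every `f ∈ PW_ω(G)` one has `‖f‖_W ≤ ‖f‖₂ ≤ ((1 + λ·ω_max)/(1 − λω)) ‖f‖_W`,
where `‖f‖_W = (Σ_{w ∈ W} |f(w)|²)^{1/2}` and `ω_max = ‖L‖`.  Here `L` is the
normalized graph Laplacian on `ℓ²(V)`. -/
theorem complement_of_lambda_set_is_sampling
    {V : Type*} [Countable V] (G : SimpleGraph V) [DecidableRel G.Adj]
    [G.LocallyFinite] (hconn : G.Connected)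
    (hdeg : ∃ D : ℕ, ∀ v : V, G.degree v ≤ D)
    (L : lp (fun _ : V => ℂ) 2 →L[ℂ] lp (fun _ : V => ℂ) 2)
    (hL : ∀ (f : lp (fun _ : V => ℂ) 2) (v : V),
      L f v = (1 / (Real.sqrt (G.degree v) : ℂ)) *
        ∑ u ∈ G.neighborFinset v,
          (f v / (Real.sqrt (G.degree v) : ℂ) - f u / (Real.sqrt (G.degree u) : ℂ)))
    (S : Set V) (lam ω : ℝ) (hlam : 0 ≤ lam) (hω : 0 ≤ ω)
    (hS : ∀ φ : lp (fun _ : V => ℂ) 2, (∀ v ∉ S, φ v = 0) → ‖φ‖ ≤ lam * ‖L φ‖)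
    (hlamω : lam * ω < 1) :
    ∀ f : lp (fun _ : V => ℂ) 2, memPaleyWiener L ω f →
      Real.sqrt (∑' w : (Sᶜ : Set V), ‖f ↑w‖ ^ 2) ≤ ‖f‖ ∧
      ‖f‖ ≤ ((1 + lam * ‖L‖) / (1 - lam * ω)) *
        Real.sqrt (∑' w : (Sᶜ : Set V), ‖f ↑w‖ ^ 2) := by
  intro f hf
  classical
  have hp : (0:ℝ) < (2 : ENNReal).toReal := by norm_num
  -- summability of ‖f v‖²
  have hfs : Summable (fun v : V => ‖f v‖ ^ (2:ENNReal).toReal) :=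
    (lp.memℓp f).summable hp
  -- the restriction of f to S
  have hmemS : Memℓp (Set.indicator S (fun v => f v)) 2 := by
    apply memℓp_gen
    refine Summable.of_nonneg_of_le (fun v => ?_) (fun v => ?_) hfs
    · positivity
    · by_cases hv : v ∈ S <;>
        simp [Set.indicator_of_mem, Set.indicator_of_notMem, hv] <;> positivity
  have hmemW : Memℓp (Set.indicator Sᶜ (fun v => f v)) 2 := by
    apply memℓp_gen
    refine Summable.of_nonneg_of_le (fun v => ?_) (fun v => ?_) hfs
    · positivity
    · by_cases hv : v ∈ Sᶜ <;>
        simp [Set.indicator_of_mem, Set.indicator_of_notMem, hv] <;> positivity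
  set g : lp (fun _ : V => ℂ) 2 := ⟨_, hmemS⟩ with hgdef
  set h : lp (fun _ : V => ℂ) 2 := ⟨_, hmemW⟩ with hhdef
  have hgv : ∀ v, g v = Set.indicator S (fun v => f v) v := fun v => rfl
  have hhv : ∀ v, h v = Set.indicator Sᶜ (fun v => f v) v := fun v => rfl
  have hfgh : f = g + h := by
    ext v
    simp only [lp.coeFn_add, Pi.add_apply, hgv, hhv]
    by_cases hv : v ∈ S <;>
      simp [Set.indicator_of_mem, Set.indicator_of_notMem, hv]
  -- norm of h is the W-norm
  have htsum : (∑' w : (Sᶜ : Set V), ‖f ↑w‖ ^ 2) = ∑' v : V, ‖h v‖ ^ (2 : ENNReal).toReal := by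
    rw [tsum_subtype (Sᶜ : Set V) (fun v => ‖f v‖ ^ 2)]
    congr 1
    ext v
    by_cases hv : v ∈ Sᶜ <;>
      simp [hhv, Set.indicator_of_mem, Set.indicator_of_notMem, hv]
  have hhnorm : Real.sqrt (∑' w : (Sᶜ : Set V), ‖f ↑w‖ ^ 2) = ‖h‖ := by
    rw [htsum, ← lp.norm_rpow_eq_tsum hp h]
    rw [show ((2:ENNReal).toReal) = 2 by norm_num]
    rw [Real.sqrt_eq_iff_eq_sq] <;> [norm_num; positivity; exact norm_nonneg _]
  rw [hhnorm]
  constructor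
  · -- ‖h‖ ≤ ‖f‖ since pointwise ≤
    have h1 : ‖h‖ ^ (2:ENNReal).toReal ≤ ‖f‖ ^ (2:ENNReal).toReal := by
      rw [lp.norm_rpow_eq_tsum hp, lp.norm_rpow_eq_tsum hp]
      refine Summable.tsum_le_tsum (fun v => ?_) ((lp.memℓp h).summable hp) hfs
      by_cases hv : v ∈ Sᶜ <;>
        simp [hhv, Set.indicator_of_mem, Set.indicator_of_notMem, hv] <;> positivity
    have h2 : ‖h‖ ^ (2:ℕ) ≤ ‖f‖ ^ (2:ℕ) := by
      rw [show ((2:ENNReal).toReal) = ((2:ℕ):ℝ) by norm_num, Real.rpow_natCast,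
        Real.rpow_natCast] at h1
      exact h1
    nlinarith [norm_nonneg h, norm_nonneg f, h2]
  · -- main estimate
    have hg0 : ∀ v ∉ S, g v = 0 := by
      intro v hv; simp [hgv, Set.indicator_of_notMem, hv]
    have h1 : ‖g‖ ≤ lam * ‖L g‖ := hS g hg0
    have hLf : ‖L f‖ ≤ ω * ‖f‖ := by
      have := hf 1
      simpa using this
    have hLg : ‖L g‖ ≤ ‖L f‖ + ‖L‖ * ‖h‖ := by
      have : L g = L f - L h := by rw [hfgh]; simp
      rw [this]
      calc ‖L f - L h‖ ≤ ‖L f‖ + ‖L h‖ := norm_sub_le _ _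
        _ ≤ ‖L f‖ + ‖L‖ * ‖h‖ := by
            have := L.le_opNorm h; linarith
    have hfle : ‖f‖ ≤ ‖g‖ + ‖h‖ := by
      rw [hfgh]; exact norm_add_le _ _
    have key : ‖f‖ ≤ lam * ω * ‖f‖ + (1 + lam * ‖L‖) * ‖h‖ := by
      have e1 : lam * ‖L g‖ ≤ lam * (ω * ‖f‖ + ‖L‖ * ‖h‖) :=
        mul_le_mul_of_nonneg_left (by linarith) hlam
      calc ‖f‖ ≤ ‖g‖ + ‖h‖ := hfle
        _ ≤ lam * ‖L g‖ + ‖h‖ := by linarith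
        _ ≤ lam * (ω * ‖f‖ + ‖L‖ * ‖h‖) + ‖h‖ := by linarith
        _ = lam * ω * ‖f‖ + (1 + lam * ‖L‖) * ‖h‖ := by ring
    have hpos : (0:ℝ) < 1 - lam * ω := by linarith
    rw [div_mul_eq_mul_div, le_div_iff₀ hpos]
    linarith
end
end
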